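/- Let κ > ω be a limit cardinal and let {X_i : i ∈ I} be a set of topological spaces with |I| ≥ κ and S(X_i) ≥ 3 for each i ∈ I. Let α := sup{S((X_I)_γ) : ω ≤ γ < κ} (supremum over infinite cardinals γ < κ). Then: (a) κ ≤ α ≤ S((X_I)_κ) ≤ α⁺, and κ⁺ ≤ S((X_I)_κ); (b) if α is regular and κ < α then S((X_I)_κ) = α; and (c) if α is singular or κ = α then S((X_I)_κ) = α⁺. -/

import Mathlib

open Cardinal TopologicalSpace Set

universe u

/-- The `κ`-box topology on a product of topological spaces: generated by the boxes
`Π i, U i` with each `U i` open and fewer than `κ` coordinates restricted. -/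
def boxTopology (κ : Cardinal.{u}) {ι : Type u} (X : ι → Type u)
    [∀ i, TopologicalSpace (X i)] : TopologicalSpace (∀ i, X i) :=
  TopologicalSpace.generateFrom
    {S | ∃ U : ∀ i, Set (X i), (∀ i, IsOpen (U i)) ∧
      #{i | U i ≠ Set.univ} < κ ∧ S = Set.pi Set.univ U}

/-- A cellular family: a family of pairwise disjoint nonempty open sets. -/
def IsCellular {X : Type u} [TopologicalSpace X] (C : Set (Set X)) : Prop :=
  (∀ U ∈ C, IsOpen U ∧ U.Nonempty) ∧ C.Pairwise fun U V => Disjoint U V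

/-- The Souslin number: the least cardinal `c` such that no cellular family has
cardinality `c` (finite values allowed). -/
noncomputable def souslin (X : Type u) [TopologicalSpace X] : Cardinal.{u} :=
  sInf {c | ¬∃ C : Set (Set X), IsCellular C ∧ #C = c}

/-!
A Δ-type construction gives the lower bounds: along a well-ordered set of coordinates, the `s`-th
box is `U` at the `s`-th coordinate and `V` at all earlier ones (`U`, `V` disjoint), so these boxes
are pairwise disjoint and each restricts as many coordinates as its initial segment has elements.
For the upper bounds, a cellular family of regular size `μ > κ` in the `κ`-box product shrinks to
a family of boxes; by pigeonhole `μ` of them restrict the same number `σ < κ` of coordinates, so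
they form a cellular family in the `σ⁺`-box product, which is impossible once `μ ≥ α`.

When `α` is singular the bound `α⁺` is attained by the Erdős–Tarski theorem: a Souslin number is
never singular. For singular `λ`, take a maximal disjoint family `𝒜` of open sets with local
Souslin number `< λ`. If some open set `W` misses `⋃ 𝒜`, every open subset of `W` has cellular
families of all sizes `< λ`, and `cf λ < λ` of them inside `W` glue to one of size `λ`. Otherwise
`⋃ 𝒜` is dense, `|𝒜| < λ`, and a counting argument shows that the local Souslin numbers of the
members of `𝒜` are cofinal in `λ`; cellular families inside the members add up to size `λ`.
-/

open Function Order Topology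

section Cellular

variable {X : Type u} {t t' : TopologicalSpace X} {W : Set X}

structure IsCellularFamily (t : TopologicalSpace X) (W : Set X) {J : Type*} (U : J → Set X) :
    Prop where
  isOpen : ∀ j, IsOpen[t] (U j)
  nonempty : ∀ j, (U j).Nonempty
  subset : ∀ j, U j ⊆ W
  pairwise_disjoint : Pairwise (Disjoint on U)

noncomputable def souslinIn (t : TopologicalSpace X) (W : Set X) : Cardinal.{u} :=
  sInf {c | ¬∃ C : Set (Set X), @IsCellular X t C ∧ (∀ U ∈ C, U ⊆ W) ∧ #C = c}

theorem souslin_eq_souslinIn_univ : @souslin X t = souslinIn t univ := by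
  simp [souslin, souslinIn]

theorem lt_souslinIn_iff {c : Cardinal.{u}} :
    c < souslinIn t W ↔ ∃ C : Set (Set X), @IsCellular X t C ∧ (∀ U ∈ C, U ⊆ W) ∧ #C = c := by
  refine ⟨fun h => by_contra fun hc => (csInf_le' hc).not_gt h, fun ⟨C, hC, hW, hc⟩ => ?_⟩
  -- no family has more members than `Set X` has elements, so the infimum is attained
  have hne : {c | ¬∃ C : Set (Set X), @IsCellular X t C ∧ (∀ U ∈ C, U ⊆ W) ∧ #C = c}.Nonempty :=
    ⟨succ #(Set X), fun ⟨C, _, _, hC⟩ => (hC ▸ mk_set_le C).not_gt (lt_succ _)⟩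
  refine lt_of_not_ge fun hle => csInf_mem hne ?_
  obtain ⟨C', hC', hcard⟩ := le_mk_iff_exists_subset.1 (hc ▸ hle)
  exact ⟨C', ⟨fun U hU => hC.1 U (hC' hU), hC.2.mono hC'⟩, fun U hU => hW U (hC' hU), hcard⟩

namespace IsCellularFamily

variable {J : Type u} {U : J → Set X}

theorem injective (hU : IsCellularFamily t W U) : Injective U :=
  pairwise_ne_iff_injective.1 <| hU.pairwise_disjoint.mono fun i j hd he => by
    rw [onFun, he, disjoint_self, bot_eq_empty] at hd
    exact (hU.nonempty j).ne_empty hd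

theorem mk_lt_souslinIn (hU : IsCellularFamily t W U) : #J < souslinIn t W := by
  refine lt_souslinIn_iff.2 ⟨range U, ⟨?_, ?_⟩, ?_, mk_range_eq U hU.injective⟩
  · rintro _ ⟨j, rfl⟩
    exact ⟨hU.isOpen j, hU.nonempty j⟩
  · rintro _ ⟨i, rfl⟩ _ ⟨j, rfl⟩ hij
    exact hU.pairwise_disjoint (ne_of_apply_ne U hij)
  · rintro _ ⟨j, rfl⟩
    exact hU.subset j

end IsCellularFamily

theorem exists_isCellularFamily {J : Type u} (h : #J < souslinIn t W) :
    ∃ U : J → Set X, IsCellularFamily t W U := by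
  obtain ⟨C, hC, hW, hJ⟩ := lt_souslinIn_iff.1 h
  obtain ⟨e⟩ := Cardinal.eq.1 hJ.symm
  refine ⟨fun j => e j, fun j => (hC.1 _ (e j).2).1, fun j => (hC.1 _ (e j).2).2,
    fun j => hW _ (e j).2, fun i j hij => hC.2 (e i).2 (e j).2 ?_⟩
  exact fun h => hij (e.injective (Subtype.ext h))

theorem souslinIn_anti_topology (h : t' ≤ t) : souslinIn t W ≤ souslinIn t' W := by
  refine le_of_forall_lt fun c hc => ?_
  rw [← mk_out c] at hc ⊢
  obtain ⟨U, hU⟩ := exists_isCellularFamily hc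
  exact IsCellularFamily.mk_lt_souslinIn
    ⟨fun j => (hU.isOpen j).mono h, hU.nonempty, hU.subset, hU.pairwise_disjoint⟩

theorem sum_lt_souslinIn_univ {J : Type u} {V : J → Set X} (hV : Pairwise (Disjoint on V))
    {β : J → Cardinal.{u}} (hβ : ∀ j, β j < souslinIn t (V j)) : sum β < souslinIn t univ := by
  have hU : ∀ j, ∃ U : (β j).out → Set X, IsCellularFamily t (V j) U := fun j =>
    exists_isCellularFamily ((mk_out (β j)).symm ▸ hβ j)
  choose U hU using hU
  have hsum : #(Σ j, (β j).out) = sum β := by simp [mk_sigma]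
  refine hsum ▸ IsCellularFamily.mk_lt_souslinIn (U := fun p => U p.1 p.2)
    ⟨fun p => (hU p.1).isOpen p.2, fun p => (hU p.1).nonempty p.2, fun _ => subset_univ _, ?_⟩
  rintro ⟨i, a⟩ ⟨j, b⟩ hab
  rcases eq_or_ne i j with rfl | hij
  · exact (hU i).pairwise_disjoint fun h => hab (congrArg (Sigma.mk i) h)
  · exact (hV hij).mono ((hU i).subset a) ((hU j).subset b)

theorem exists_disjoint_of_three_le_souslin {Z : Type u} [TopologicalSpace Z]
    (h : 3 ≤ souslin Z) :
    ∃ U V : Set Z, IsOpen U ∧ IsOpen V ∧ U.Nonempty ∧ V.Nonempty ∧ Disjoint U V := by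
  rw [souslin_eq_souslinIn_univ] at h
  obtain ⟨W, hW⟩ :=
    exists_isCellularFamily (J := ULift.{u} Bool) <|
      (by norm_num : #(ULift.{u} Bool) < 3).trans_le h
  exact ⟨W ⟨true⟩, W ⟨false⟩, hW.isOpen _, hW.isOpen _, hW.nonempty _, hW.nonempty _,
    hW.pairwise_disjoint (by simp)⟩

end Cellular

namespace Cardinal

theorem IsSingular.exists_le_sum {κ : Cardinal.{u}} (hκ : κ.IsSingular) :
    ∃ (J : Type u) (f : J → Cardinal.{u}), #J < κ ∧ (∀ j, f j < κ) ∧ κ ≤ sum f := by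
  have := noMaxOrder hκ.aleph0_le
  obtain ⟨S, hS, hcard⟩ := Order.exists_cof_eq κ.ord.ToType
  refine ⟨S, fun s => #(Iio s.1), ?_, fun s => by simpa using mk_Iio_lt s.1, ?_⟩
  · rw [hcard, Ordinal.cof_toType]
    exact hκ.cof_ord_lt
  have hcover : (⋃ s : S, Iio s.1) = Set.univ := by
    refine eq_univ_of_forall fun x => ?_
    obtain ⟨y, hxy⟩ := exists_gt x
    obtain ⟨s, hs, hys⟩ := hS y
    exact mem_iUnion.2 ⟨⟨s, hs⟩, hxy.trans_le hys⟩
  calc κ = #κ.ord.ToType := by simp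
    _ = #(⋃ s : S, Iio s.1) := by rw [hcover, mk_univ]
    _ ≤ _ := mk_iUnion_le_sum_mk

theorem exists_lt_forall_exists_le {J : Type*} {s : J → Cardinal.{u}} (hpos : ∀ j, 0 < s j)
    (hs : ∀ j, ∃ j', s j < s j') :
    ∃ g : J → Cardinal.{u}, (∀ j, g j < s j) ∧ ∀ j, ∃ j', s j ≤ g j' := by
  -- `g j` is the predecessor of `s j` among the values of `s`, when there is one
  have hg : ∀ j, ∃ g < s j, ∀ x, IsGreatest (range s ∩ Iio (s j)) x → g = x := by
    intro j
    by_cases h : ∃ x, IsGreatest (range s ∩ Iio (s j)) x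
    · obtain ⟨x, hx⟩ := h
      exact ⟨x, hx.1.2, fun y hy => hx.unique hy⟩
    · exact ⟨0, hpos j, fun x hx => (h ⟨x, hx⟩).elim⟩
  choose g hlt hgreat using hg
  refine ⟨g, hlt, fun j => ?_⟩
  set M := {x ∈ range s | s j < x}
  have hM : M.Nonempty := by
    obtain ⟨j', h⟩ := hs j
    exact ⟨s j', ⟨j', rfl⟩, h⟩
  obtain ⟨⟨j', hj'⟩, hlt'⟩ := csInf_mem hM
  refine ⟨j', (hgreat j' (s j) ⟨⟨⟨j, rfl⟩, hj' ▸ hlt'⟩, ?_⟩).ge⟩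
  rintro _ ⟨⟨i, rfl⟩, hi⟩
  by_contra! hji
  exact (csInf_le' (s := M) ⟨⟨i, rfl⟩, hji⟩).not_gt (hj' ▸ hi :)

end Cardinal

section BoxTopology

variable {ι : Type u} (X : ι → Type u) [∀ i, TopologicalSpace (X i)]

theorem boxTopology_anti {γ γ' : Cardinal.{u}} (h : γ ≤ γ') :
    boxTopology γ' X ≤ boxTopology γ X :=
  generateFrom_anti fun _ ⟨U, hU, hcard, hS⟩ => ⟨U, hU, hcard.trans_le h, hS⟩

theorem souslin_boxTopology_mono {γ γ' : Cardinal.{u}} (h : γ ≤ γ') :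
    @souslin _ (boxTopology γ X) ≤ @souslin _ (boxTopology γ' X) := by
  simp only [souslin_eq_souslinIn_univ]
  exact souslinIn_anti_topology (boxTopology_anti X h)

theorem isOpen_pi_boxTopology {γ : Cardinal.{u}} {U : ∀ i, Set (X i)} (hU : ∀ i, IsOpen (U i))
    (hcard : #{i | U i ≠ Set.univ} < γ) : IsOpen[boxTopology γ X] (pi univ U) :=
  isOpen_generateFrom_of_mem ⟨U, hU, hcard, rfl⟩

theorem isTopologicalBasis_boxTopology {κ : Cardinal.{u}} (hκ : ℵ₀ ≤ κ) :
    @IsTopologicalBasis _ (boxTopology κ X) {S | ∃ U : ∀ i, Set (X i), (∀ i, IsOpen (U i)) ∧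
      #{i | U i ≠ Set.univ} < κ ∧ S = pi univ U} := by
  refine @IsTopologicalBasis.mk _ (boxTopology κ X) _ ?_ ?_ rfl
  · rintro _ ⟨U, hU, hUc, rfl⟩ _ ⟨V, hV, hVc, rfl⟩ x hx
    refine ⟨_, ⟨fun i => U i ∩ V i, fun i => (hU i).inter (hV i), ?_, rfl⟩,
      pi_inter_distrib ▸ hx, pi_inter_distrib.le⟩
    calc #{i | U i ∩ V i ≠ Set.univ}
        ≤ #({i | U i ≠ Set.univ} ∪ {i | V i ≠ Set.univ} : Set ι) :=
          mk_le_mk_of_subset fun i hi => by by_contra h; simp_all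
      _ ≤ _ := mk_union_le _ _
      _ < κ := add_lt_of_lt hκ hUc hVc
  · exact sUnion_eq_univ_iff.2 fun _ => ⟨univ, ⟨fun _ => univ, fun _ => isOpen_univ,
      by simpa using aleph0_pos.trans_le hκ, by simp⟩, trivial⟩

theorem exists_pi_subset_of_isOpen_boxTopology {κ : Cardinal.{u}} (hκ : ℵ₀ ≤ κ)
    {O : Set (∀ i, X i)} (hO : IsOpen[boxTopology κ X] O) (hne : O.Nonempty) :
    ∃ U : ∀ i, Set (X i), (∀ i, IsOpen (U i)) ∧ #{i | U i ≠ Set.univ} < κ ∧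
      (pi univ U).Nonempty ∧ pi univ U ⊆ O := by
  obtain ⟨x, hx⟩ := hne
  obtain ⟨_, ⟨U, hU, hUc, rfl⟩, hxU, hUO⟩ :=
    @IsTopologicalBasis.exists_subset_of_mem_open _ (boxTopology κ X) _
      (isTopologicalBasis_boxTopology X hκ) _ _ hx hO
  exact ⟨U, hU, hUc, ⟨x, hxU⟩, hUO⟩

theorem mk_lt_souslin_boxTopology_of_embedding {T : Type u} [LinearOrder T] (f : T ↪ ι)
    {γ : Cardinal.{u}} (hγ : ∀ s : T, #(Iic s) < γ)
    (hX : ∀ i, ∃ U V : Set (X i), IsOpen U ∧ IsOpen V ∧ U.Nonempty ∧ V.Nonempty ∧ Disjoint U V) :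
    #T < @souslin _ (boxTopology γ X) := by
  choose U V hU hV hUne hVne hUV using hX
  classical
  -- the box `B s` is `U` at `f s` and `V` at `f r` for every `r < s`, so that `B r` and `B s`
  -- are disjoint at the coordinate `f r`
  let B : T → ∀ i, Set (X i) := fun s i =>
    if i = f s then U i else if ∃ r < s, f r = i then V i else univ
  have hBopen : ∀ s i, IsOpen (B s i) := fun s i => by
    dsimp only [B]; split_ifs <;> simp [hU, hV]
  have hBne : ∀ s i, (B s i).Nonempty := fun s i => by
    dsimp only [B]; split_ifs
    exacts [hUne i, hVne i, (hUne i).mono (subset_univ _)]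
  have hsupp : ∀ s, {i | B s i ≠ Set.univ} ⊆ f '' Iic s := fun s i hi => by
    by_contra hnot
    refine hi ((if_neg fun h => hnot ⟨s, le_rfl, h.symm⟩).trans (if_neg ?_))
    rintro ⟨r, hr, rfl⟩
    exact hnot ⟨r, hr.le, rfl⟩
  have hdisj : ∀ r s, r < s → Disjoint (pi univ (B r)) (pi univ (B s)) := fun r s hrs => by
    refine disjoint_univ_pi.2 ⟨f r, ?_⟩
    have hne : f r ≠ f s := f.injective.ne hrs.ne
    simpa [B, hne, hrs] using hUV (f r)
  rw [souslin_eq_souslinIn_univ]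
  refine IsCellularFamily.mk_lt_souslinIn (U := fun s => pi univ (B s))
    ⟨fun s => isOpen_pi_boxTopology X (hBopen s) ?_, fun s => univ_pi_nonempty_iff.2 (hBne s),
      fun _ => subset_univ _, fun r s hrs => ?_⟩
  · exact (mk_le_mk_of_subset (hsupp s)).trans_lt (mk_image_le.trans_lt (hγ s))
  · rcases hrs.lt_or_gt with h | h
    · exact hdisj r s h
    · exact (hdisj s r h).symm

theorem lt_souslin_boxTopology {μ γ : Cardinal.{u}} (hμ : μ ≤ #ι) (hγ : ∀ δ < μ, succ δ < γ)
    (hX : ∀ i, 3 ≤ souslin (X i)) : μ < @souslin _ (boxTopology γ X) := by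
  obtain ⟨f⟩ := (le_def _ _).1 ((mk_toType μ.ord).trans (card_ord μ) ▸ hμ)
  have hIic : ∀ s : μ.ord.ToType, #(Iic s) < γ := fun s =>
    calc #(Iic s) ≤ #(Iio s) + 1 := Iio_insert (a := s) ▸ mk_insert_le
      _ ≤ succ #(Iio s) := add_one_le_of_lt (lt_succ _)
      _ < γ := hγ _ (by simpa using mk_Iio_lt s)
  simpa using mk_lt_souslin_boxTopology_of_embedding X f hIic fun i =>
    exists_disjoint_of_three_le_souslin (hX i)

theorem souslin_boxTopology_le {κ μ : Cardinal.{u}} (hκ : ℵ₀ < κ) (hlim : IsSuccLimit κ)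
    (hμ : μ.IsRegular) (hκμ : κ < μ)
    (h : ∀ γ, ℵ₀ ≤ γ → γ < κ → @souslin _ (boxTopology γ X) ≤ μ) :
    @souslin _ (boxTopology κ X) ≤ μ := by
  rw [souslin_eq_souslinIn_univ]
  refine le_of_not_gt fun hlt => ?_
  obtain ⟨O, hO⟩ := exists_isCellularFamily ((mk_out μ).symm ▸ hlt)
  choose B hB hBcard hBne hBO using fun j =>
    exists_pi_subset_of_isOpen_boxTopology X hκ.le (hO.isOpen j) (hO.nonempty j)
  -- `μ` of the boxes restrict the same number `σ < κ` of coordinates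
  let F : μ.out → κ.ord.ToType := fun j =>
    Ordinal.ToType.mk ⟨(#{i | B j i ≠ Set.univ}).ord, ord_lt_ord.2 (hBcard j)⟩
  obtain ⟨s, hs⟩ := infinite_pigeonhole_card F μ (mk_out μ).ge hμ.aleph0_le
    (by rwa [hμ.cof_ord, mk_toType, card_ord])
  set σ := (Ordinal.ToType.mk.symm s).1.card
  have hσ : σ < κ := lt_ord.1 (Ordinal.ToType.mk.symm s).2
  have hsupp : ∀ j ∈ F ⁻¹' {s}, #{i | B j i ≠ Set.univ} = σ := fun j hj => by
    simp [σ, ← (mem_singleton_iff.1 hj), F]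
  set γ := succ (σ ⊔ ℵ₀)
  have hfiber : IsCellularFamily (boxTopology γ X) univ fun j : F ⁻¹' {s} => pi univ (B j) :=
    ⟨fun j => isOpen_pi_boxTopology X (hB j)
        ((hsupp j j.2).trans_lt (le_sup_left.trans_lt (lt_succ _))),
      fun j => hBne j, fun _ => subset_univ _, fun j j' hjj' =>
        (hO.pairwise_disjoint (Subtype.coe_ne_coe.2 hjj')).mono (hBO j) (hBO j')⟩
  have hγ : souslinIn (boxTopology γ X) univ ≤ μ := by
    rw [← souslin_eq_souslinIn_univ]
    exact h γ (le_sup_right.trans (le_succ _)) (hlim.succ_lt (max_lt hσ hκ))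
  exact (hfiber.mk_lt_souslinIn.trans_le hγ).not_ge hs

end BoxTopology

section ErdosTarski

variable {Y : Type u} {t : TopologicalSpace Y}

theorem souslinIn_pos {W : Set Y} : 0 < souslinIn t W :=
  lt_souslinIn_iff.2 ⟨∅, ⟨by simp, by simp⟩, by simp, by simp⟩

theorem exists_pairwiseDisjoint_forall_inter_nonempty (𝒮 : Set (Set Y)) :
    ∃ 𝒜 ⊆ 𝒮, 𝒜.PairwiseDisjoint id ∧ ∀ P ∈ 𝒮, P.Nonempty → ∃ A ∈ 𝒜, (P ∩ A).Nonempty := by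
  obtain ⟨𝒜, h𝒜⟩ := zorn_subset {𝒜 | 𝒜 ⊆ 𝒮 ∧ 𝒜.PairwiseDisjoint id} fun c hc hchain =>
    ⟨⋃₀ c, ⟨sUnion_subset fun _ h => (hc h).1,
      (hchain.pairwiseDisjoint_sUnion id).2 fun _ h => (hc h).2⟩, fun _ => subset_sUnion_of_mem⟩
  refine ⟨𝒜, h𝒜.prop.1, h𝒜.prop.2, fun P hP hne => ?_⟩
  by_contra! hdisj
  have hins : insert P 𝒜 ∈ {𝒜 | 𝒜 ⊆ 𝒮 ∧ 𝒜.PairwiseDisjoint id} :=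
    ⟨insert_subset hP h𝒜.prop.1,
      h𝒜.prop.2.insert fun A hA _ => disjoint_iff_inter_eq_empty.2 (hdisj A hA)⟩
  have hP𝒜 : P ∈ 𝒜 := h𝒜.2 hins (subset_insert P 𝒜) (mem_insert P 𝒜)
  exact hne.ne_empty (by simpa using hdisj P hP𝒜)

theorem mk_le_sum_souslinIn {J K : Type u} {A : J → Set Y} (hA : ∀ j, IsOpen[t] (A j))
    (hdense : ∀ V, IsOpen[t] V → V.Nonempty → ∃ j, (V ∩ A j).Nonempty)
    {U : K → Set Y} (hU : IsCellularFamily t univ U) :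
    #K ≤ sum fun j => souslinIn t (A j) := by
  choose F hF using fun k => hdense (U k) (hU.isOpen k) (hU.nonempty k)
  have hfiber : ∀ j, IsCellularFamily t (A j) fun k : {k // F k = j} => U k ∩ A j := fun j =>
    ⟨fun k => (hU.isOpen k).inter (hA j), fun ⟨k, hk⟩ => hk ▸ hF k, fun _ => inter_subset_right,
      fun k k' hkk' => (hU.pairwise_disjoint fun h => hkk' (Subtype.ext h)).mono
        inter_subset_left inter_subset_left⟩
  calc #K = sum fun j => #{k // F k = j} := by
        rw [← mk_sigma]
        exact mk_congr (Equiv.sigmaFiberEquiv F).symm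
    _ ≤ _ := sum_le_sum _ _ fun j => (hfiber j).mk_lt_souslinIn.le

theorem lt_souslinIn_univ_of_forall_le {κ : Cardinal.{u}} (hκ : κ.IsSingular) {W : Set Y}
    (hW : IsOpen[t] W) (hWne : W.Nonempty)
    (hgood : ∀ V ⊆ W, IsOpen[t] V → V.Nonempty → κ ≤ souslinIn t V) :
    κ < souslinIn t univ := by
  obtain ⟨J, f, hJ, hf, hsum⟩ := hκ.exists_le_sum
  obtain ⟨V, hV⟩ := exists_isCellularFamily (hJ.trans_le (hgood W subset_rfl hW hWne))
  exact hsum.trans_lt <| sum_lt_souslinIn_univ hV.pairwise_disjoint fun j =>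
    (hf j).trans_le (hgood _ (hV.subset j) (hV.isOpen j) (hV.nonempty j))

theorem lt_souslinIn_univ_of_dense {κ : Cardinal.{u}} (hκ : ℵ₀ < κ) (hlim : IsSuccLimit κ)
    {J : Type u} {A : J → Set Y} (hAo : ∀ j, IsOpen[t] (A j)) (hdisj : Pairwise (Disjoint on A))
    (hdense : ∀ V, IsOpen[t] V → V.Nonempty → ∃ j, (V ∩ A j).Nonempty)
    (hJ : #J < κ) (hA : ∀ j, souslinIn t (A j) < κ) (hκle : κ ≤ souslinIn t univ) :
    κ < souslinIn t univ := by
  have hcof : ∀ τ < κ, ∃ j, τ < souslinIn t (A j) := by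
    intro τ hτ
    by_contra! hle
    set m := #J ⊔ τ ⊔ ℵ₀
    have hm : succ m < souslinIn t univ :=
      (hlim.succ_lt (max_lt (max_lt hJ hτ) hκ)).trans_le hκle
    obtain ⟨U, hU⟩ := exists_isCellularFamily ((mk_out (succ m)).symm ▸ hm)
    have hsucc : succ m ≤ m := calc
      succ m = #(succ m).out := (mk_out _).symm
      _ ≤ sum fun j => souslinIn t (A j) := mk_le_sum_souslinIn hAo hdense hU
      _ ≤ sum fun _ : J => m :=
        sum_le_sum _ _ fun j => (hle j).trans (le_sup_right.trans le_sup_left)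
      _ = #J * m := sum_const' _ _
      _ ≤ m * m := mul_le_mul_left (le_sup_left.trans le_sup_left) m
      _ = m := mul_eq_self le_sup_right
    exact (lt_succ m).not_ge hsucc
  obtain ⟨g, hg, hgcof⟩ := exists_lt_forall_exists_le (s := fun j => souslinIn t (A j))
    (fun _ => souslinIn_pos) fun j => hcof _ (hA j)
  refine (le_of_forall_lt fun τ hτ => ?_).trans_lt (sum_lt_souslinIn_univ hdisj hg)
  obtain ⟨j, hj⟩ := hcof τ hτ
  obtain ⟨j', hj'⟩ := hgcof j
  exact hj.trans_le (hj'.trans (le_sum g j'))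

theorem souslin_ne_of_isSingular {κ : Cardinal.{u}} (hκ : κ.IsSingular) : @souslin Y t ≠ κ := by
  rw [souslin_eq_souslinIn_univ]
  intro hS
  refine (?_ : κ < souslinIn t univ).ne' hS
  obtain ⟨𝒜, h𝒜, hdisj, hmax⟩ :=
    exists_pairwiseDisjoint_forall_inter_nonempty {A | IsOpen[t] A ∧ A.Nonempty ∧ souslinIn t A < κ}
  by_cases hdense : ∀ V, IsOpen[t] V → V.Nonempty → ∃ A ∈ 𝒜, (V ∩ A).Nonempty
  · have hdisj' : Pairwise (Disjoint on ((↑) : 𝒜 → Set Y)) :=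
      (pairwise_subtype_iff_pairwise_set 𝒜 Disjoint).2 hdisj
    have h𝒜cell : IsCellularFamily t univ ((↑) : 𝒜 → Set Y) :=
      ⟨fun A => (h𝒜 A.2).1, fun A => (h𝒜 A.2).2.1, fun _ => subset_univ _, hdisj'⟩
    have hκ₀ : ℵ₀ < κ := hκ.aleph0_le.lt_of_ne fun h => not_isSingular_aleph0 (h ▸ hκ)
    refine lt_souslinIn_univ_of_dense hκ₀ hκ.isSuccLimit (fun A => (h𝒜 A.2).1) hdisj' ?_
      (hS ▸ h𝒜cell.mk_lt_souslinIn) (fun A => (h𝒜 A.2).2.2) hS.ge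
    intro V hV hVne
    obtain ⟨A, hA, hVA⟩ := hdense V hV hVne
    exact ⟨⟨A, hA⟩, hVA⟩
  · push Not at hdense
    obtain ⟨W, hW, hWne, hWA⟩ := hdense
    refine lt_souslinIn_univ_of_forall_le hκ hW hWne fun V hVW hV hVne => not_lt.1 fun hlt => ?_
    obtain ⟨A, hA, hVA⟩ := hmax V ⟨hV, hVne, hlt⟩ hVne
    exact (hVA.mono (inter_subset_inter_left A hVW)).ne_empty (hWA A hA)

end ErdosTarski

theorem stmt14 (κ : Cardinal.{u}) (hκ : ℵ₀ < κ) (hlim : Order.IsSuccLimit κ)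
    {ι : Type u} (X : ι → Type u) [∀ i, TopologicalSpace (X i)]
    (hI : κ ≤ #ι) (hS : ∀ i, 3 ≤ souslin (X i)) :
    ∀ α : Cardinal.{u},
      α = (⨆ γ : Set.Ico ℵ₀ κ, @souslin (∀ i, X i) (boxTopology γ.1 X)) →
      ((κ ≤ α ∧ α ≤ @souslin (∀ i, X i) (boxTopology κ X) ∧
          @souslin (∀ i, X i) (boxTopology κ X) ≤ Order.succ α ∧
          Order.succ κ ≤ @souslin (∀ i, X i) (boxTopology κ X)) ∧
        (α.IsRegular ∧ κ < α → @souslin (∀ i, X i) (boxTopology κ X) = α) ∧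
        ((¬α.IsRegular ∨ κ = α) →
          @souslin (∀ i, X i) (boxTopology κ X) = Order.succ α)) := by
  intro α hα
  have hle_κ : ∀ γ : Ico ℵ₀ κ, @souslin _ (boxTopology γ.1 X) ≤ @souslin _ (boxTopology κ X) :=
    fun γ => souslin_boxTopology_mono X γ.2.2.le
  have hle_α : ∀ γ, ℵ₀ ≤ γ → γ < κ → @souslin _ (boxTopology γ X) ≤ α := fun γ h₀ h₁ =>
    hα ▸ le_ciSup ⟨_, forall_mem_range.2 hle_κ⟩ (⟨γ, h₀, h₁⟩ : Ico ℵ₀ κ)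
  have hαS : α ≤ @souslin _ (boxTopology κ X) := hα ▸ ciSup_le' hle_κ
  have hκα : κ ≤ α := by
    refine le_of_not_gt fun hακ => ?_
    set m := α ⊔ ℵ₀
    have hm : m < κ := max_lt hακ hκ
    have hmS := lt_souslin_boxTopology X (γ := succ m) (hm.le.trans hI)
      (fun _ hδ => succ_lt_succ hδ) hS
    exact (hmS.trans_le (hle_α _ (le_sup_right.trans (le_succ m)) (hlim.succ_lt hm))).not_ge
      le_sup_left
  have hκS : κ < @souslin _ (boxTopology κ X) :=
    lt_souslin_boxTopology X hI (fun _ hδ => hlim.succ_lt hδ) hS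
  have hub : ∀ μ, μ.IsRegular → κ < μ → α ≤ μ → @souslin _ (boxTopology κ X) ≤ μ :=
    fun μ hμ hκμ hαμ => souslin_boxTopology_le X hκ hlim hμ hκμ fun γ h₀ h₁ =>
      (hle_α γ h₀ h₁).trans hαμ
  have hSsucc : @souslin _ (boxTopology κ X) ≤ succ α :=
    hub _ (isRegular_succ (hκ.le.trans hκα)) (hκα.trans_lt (lt_succ α)) (le_succ α)
  refine ⟨⟨hκα, hαS, hSsucc, succ_le_of_lt hκS⟩,
    fun ⟨hreg, hlt⟩ => (hub α hreg hlt le_rfl).antisymm hαS, ?_⟩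
  rintro (hsing | rfl)
  · have hne := souslin_ne_of_isSingular (t := boxTopology κ X)
      (IsSingular.of_not_isRegular (hκ.le.trans hκα) hsing)
    exact hSsucc.antisymm (succ_le_of_lt (hαS.lt_of_ne hne.symm))
  · exact hSsucc.antisymm (succ_le_of_lt hκS)
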